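/- For any nonnegative integers $n$ and $s$, the 2-adic valuation of $\Phi_n(s) := \frac{1}{n!}\sum_{i \ge 0} \binom{n}{2i+1}(2i)^s$ is at least $s - \lfloor n/2 \rfloor$. -/

import Mathlib

/-!
Let `G n k = oddChooseSum n (·.choose k) = ∑ᵢ C(n, 2i+1) C(i, k)`. Expanding
`i ^ s = ∑ₖ S(s, k) k! C(i, k)` with Stirling numbers of the second kind gives
`n! Φₙ(s) = 2 ^ s ∑ₖ S(s, k) k! G n k`. Pascal's rule yields
`G (n+2) (k+1) = 2 G (n+1) (k+1) + G n k`, hence the closed form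
`G (m+2k+1) k = 2 ^ m C(m+k, k)`, while `G n k = 0` for `n ≤ 2k`. As
`m! · k! C(m+k, k) = (m+k)!` and `ν(m!) ≤ m`, every `k! G n k` is divisible by `2 ^ ν((n/2)!)`,
and Legendre's `ν(n!) = n/2 + ν((n/2)!)` finishes the bound.
-/

/-- `Φ n s = (1/n!) ∑_i C(n, 2i+1) (2i)^s`, with the convention `0^0 = 1`. -/
def Phi (n s : ℕ) : ℚ :=
  (1 / (Nat.factorial n : ℚ)) *
    ∑ i ∈ Finset.range (n + 1), (Nat.choose n (2 * i + 1) : ℚ) * ((2 * i : ℕ) : ℚ) ^ s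

open Finset Nat

section ChooseSums

def oddChooseSum (n : ℕ) (f : ℕ → ℕ) : ℕ :=
  ∑ i ∈ range (n + 1), n.choose (2 * i + 1) * f i

def evenChooseSum (n : ℕ) (f : ℕ → ℕ) : ℕ :=
  ∑ i ∈ range (n + 1), n.choose (2 * i) * f i

variable {n : ℕ} {f g : ℕ → ℕ}

theorem oddChooseSum_eq_sum_range {N : ℕ} (hN : n ≤ N) :
    oddChooseSum n f = ∑ i ∈ range (N + 1), n.choose (2 * i + 1) * f i :=
  sum_subset (range_subset_range.2 (by omega)) fun i _ hi => by
    rw [mem_range] at hi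
    rw [choose_eq_zero_of_lt (by omega), zero_mul]

theorem evenChooseSum_eq_sum_range {N : ℕ} (hN : n ≤ N) :
    evenChooseSum n f = ∑ i ∈ range (N + 1), n.choose (2 * i) * f i :=
  sum_subset (range_subset_range.2 (by omega)) fun i _ hi => by
    rw [mem_range] at hi
    rw [choose_eq_zero_of_lt (by omega), zero_mul]

theorem oddChooseSum_add :
    oddChooseSum n (fun i => f i + g i) = oddChooseSum n f + oddChooseSum n g := by
  simp only [oddChooseSum, mul_add, sum_add_distrib]

theorem oddChooseSum_const_mul (c : ℕ) :
    oddChooseSum n (fun i => c * f i) = c * oddChooseSum n f := by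
  simp only [oddChooseSum, mul_sum, mul_left_comm]

theorem oddChooseSum_sum {ι : Type*} (t : Finset ι) (F : ι → ℕ → ℕ) :
    oddChooseSum n (fun i => ∑ k ∈ t, F k i) = ∑ k ∈ t, oddChooseSum n (F k) := by
  simp only [oddChooseSum, mul_sum]
  exact sum_comm

theorem oddChooseSum_succ :
    oddChooseSum (n + 1) f = evenChooseSum n f + oddChooseSum n f := by
  rw [oddChooseSum, evenChooseSum_eq_sum_range n.le_succ, oddChooseSum_eq_sum_range n.le_succ,
    ← sum_add_distrib]
  simp only [choose_succ_succ, add_mul]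

theorem evenChooseSum_succ :
    evenChooseSum (n + 1) f = evenChooseSum n f + oddChooseSum n (fun i => f (i + 1)) := by
  rw [evenChooseSum, evenChooseSum_eq_sum_range n.le_succ,
    sum_range_succ' (fun i => (n + 1).choose (2 * i) * f i),
    sum_range_succ' (fun i => n.choose (2 * i) * f i), oddChooseSum, add_right_comm,
    ← sum_add_distrib]
  congr 1
  · exact sum_congr rfl fun i _ => by rw [mul_add_one, choose_succ_succ, add_mul, add_comm]
  · simp only [mul_zero, choose_zero_right]

theorem oddChooseSum_add_two :
    oddChooseSum (n + 2) f + oddChooseSum n f =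
      2 * oddChooseSum (n + 1) f + oddChooseSum n (fun i => f (i + 1)) := by
  rw [oddChooseSum_succ, evenChooseSum_succ, oddChooseSum_succ]
  ring

end ChooseSums

theorem oddChooseSum_choose_eq_zero {n k : ℕ} (h : n ≤ 2 * k) :
    oddChooseSum n (·.choose k) = 0 :=
  sum_eq_zero fun i _ => by
    dsimp only
    rcases lt_or_ge i k with hik | hik
    · rw [choose_eq_zero_of_lt hik, mul_zero]
    · rw [choose_eq_zero_of_lt (by omega), zero_mul]

theorem oddChooseSum_choose_zero_add_two (n : ℕ) :
    oddChooseSum (n + 2) (·.choose 0) = 2 * oddChooseSum (n + 1) (·.choose 0) := by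
  simpa only [choose_zero_right, add_left_inj] using
    oddChooseSum_add_two (n := n) (f := (·.choose 0))

theorem oddChooseSum_choose_succ_add_two (n k : ℕ) :
    oddChooseSum (n + 2) (·.choose (k + 1)) =
      2 * oddChooseSum (n + 1) (·.choose (k + 1)) + oddChooseSum n (·.choose k) := by
  have h := oddChooseSum_add_two (n := n) (f := (·.choose (k + 1)))
  simp only [choose_succ_succ', oddChooseSum_add] at h
  omega

theorem oddChooseSum_choose (m k : ℕ) :
    oddChooseSum (m + 2 * k + 1) (·.choose k) = 2 ^ m * (m + k).choose k := by
  induction k generalizing m with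
  | zero =>
    induction m with
    | zero => rfl
    | succ m ih =>
      rw [oddChooseSum_choose_zero_add_two, ih]
      simp [pow_succ, mul_comm]
  | succ k ih =>
    induction m with
    | zero =>
      have h := oddChooseSum_choose_succ_add_two (2 * k + 1) k
      rw [oddChooseSum_choose_eq_zero (n := 2 * k + 1 + 1) (by omega), mul_zero, zero_add] at h
      rw [show 0 + 2 * (k + 1) + 1 = 2 * k + 1 + 2 by ring, h]
      simpa using ih 0
    | succ m ihm =>
      have h := oddChooseSum_choose_succ_add_two (m + 2 * k + 2) k
      rw [show m + 2 * k + 2 + 1 = m + 2 * (k + 1) + 1 by ring, ihm,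
        show m + 2 * k + 2 = m + 1 + 2 * k + 1 by ring, ih] at h
      rw [show m + 1 + 2 * (k + 1) + 1 = m + 1 + 2 * k + 1 + 2 by ring, h,
        show m + 1 + (k + 1) = m + k + 1 + 1 by ring, choose_succ_succ' (m + k + 1),
        show m + 1 + k = m + k + 1 by ring, ← add_assoc, pow_succ]
      ring

theorem pow_padicValNat_factorial_half_dvd (n k : ℕ) :
    2 ^ padicValNat 2 (n / 2)! ∣ k ! * oddChooseSum n (·.choose k) := by
  rcases le_or_gt n (2 * k) with h | h
  · rw [oddChooseSum_choose_eq_zero h, mul_zero]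
    exact dvd_zero _
  obtain ⟨m, rfl⟩ : ∃ m, n = m + 2 * k + 1 := ⟨n - 2 * k - 1, by omega⟩
  have hfact : m ! * (k ! * (m + k).choose k) = (m + k)! := by
    rw [← add_choose_mul_factorial_mul_factorial]
    ring
  have hval : padicValNat 2 (m + k)! =
      padicValNat 2 m ! + padicValNat 2 (k ! * (m + k).choose k) := by
    rw [← hfact, padicValNat.mul (factorial_ne_zero m)
      (mul_ne_zero (factorial_ne_zero k) (choose_pos (by omega)).ne')]
  rw [oddChooseSum_choose, mul_left_comm]
  calc 2 ^ padicValNat 2 ((m + 2 * k + 1) / 2)!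
      ∣ 2 ^ padicValNat 2 (m + k)! := pow_dvd_pow 2 <|
        (padicValNat_dvd_iff_le (factorial_ne_zero _)).1 <|
          pow_padicValNat_dvd.trans (factorial_dvd_factorial (by omega))
    _ ∣ 2 ^ m * 2 ^ padicValNat 2 (k ! * (m + k).choose k) := by
        rw [hval, pow_add]
        exact mul_dvd_mul_right (pow_dvd_pow 2 (padicValNat_factorial_le 2 m)) _
    _ ∣ 2 ^ m * (k ! * (m + k).choose k) := mul_dvd_mul_left _ pow_padicValNat_dvd

theorem mul_descFactorial_eq (i k : ℕ) :
    i * i.descFactorial k = i.descFactorial (k + 1) + k * i.descFactorial k := by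
  rcases lt_or_ge i k with h | h
  · simp [descFactorial_eq_zero_iff_lt.2 h]
  · rw [descFactorial_succ, ← add_mul, Nat.sub_add_cancel h]

theorem pow_eq_sum_stirlingSecond_mul_descFactorial (s i : ℕ) :
    i ^ s = ∑ k ∈ range (s + 1), stirlingSecond s k * i.descFactorial k := by
  induction s with
  | zero => simp
  | succ s ih =>
    have hshift : ∑ k ∈ range (s + 1), k * stirlingSecond s k * i.descFactorial k =
        ∑ k ∈ range (s + 1), (k + 1) * stirlingSecond s (k + 1) * i.descFactorial (k + 1) := by
      have h := sum_range_succ' (fun k => k * stirlingSecond s k * i.descFactorial k) (s + 1)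
      rwa [sum_range_succ, stirlingSecond_eq_zero_of_lt s.lt_succ_self, mul_zero, zero_mul,
        add_zero, zero_mul, zero_mul, add_zero] at h
    calc i ^ (s + 1)
        = ∑ k ∈ range (s + 1), stirlingSecond s k * (i * i.descFactorial k) := by
          rw [_root_.pow_succ', ih, mul_sum]
          simp only [mul_left_comm]
      _ = ∑ k ∈ range (s + 1), stirlingSecond s k * i.descFactorial (k + 1) +
            ∑ k ∈ range (s + 1), k * stirlingSecond s k * i.descFactorial k := by
          simp only [mul_descFactorial_eq, mul_add, sum_add_distrib, mul_left_comm, mul_assoc]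
      _ = ∑ k ∈ range (s + 1), stirlingSecond (s + 1) (k + 1) * i.descFactorial (k + 1) := by
          simp only [hshift, ← sum_add_distrib, stirlingSecond_succ_succ, add_mul, add_comm]
      _ = ∑ k ∈ range (s + 1 + 1), stirlingSecond (s + 1) k * i.descFactorial k := by
          rw [sum_range_succ' _ (s + 1), stirlingSecond_succ_zero, zero_mul, add_zero]

theorem oddChooseSum_two_mul_pow (n s : ℕ) :
    oddChooseSum n (fun i => (2 * i) ^ s) =
      2 ^ s * ∑ k ∈ range (s + 1),
        stirlingSecond s k * (k ! * oddChooseSum n (·.choose k)) := by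
  simp only [mul_pow, oddChooseSum_const_mul]
  congr 1
  simp only [pow_eq_sum_stirlingSecond_mul_descFactorial s, descFactorial_eq_factorial_mul_choose,
    oddChooseSum_sum, oddChooseSum_const_mul]

theorem pow_dvd_oddChooseSum_two_mul_pow (n s : ℕ) :
    2 ^ (s + padicValNat 2 (n / 2)!) ∣ oddChooseSum n (fun i => (2 * i) ^ s) := by
  rw [oddChooseSum_two_mul_pow, pow_add]
  exact mul_dvd_mul_left _ <| dvd_sum fun k _ =>
    (pow_padicValNat_factorial_half_dvd n k).mul_left _

theorem padicValNat_two_factorial (n : ℕ) :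
    padicValNat 2 n ! = padicValNat 2 (n / 2)! + n / 2 := by
  rw [← padicValNat_mul_div_factorial, padicValNat_factorial_mul]

theorem Phi_eq_oddChooseSum_div (n s : ℕ) :
    Phi n s = oddChooseSum n (fun i => (2 * i) ^ s) / n ! := by
  rw [Phi, oddChooseSum, one_div_mul_eq_div]
  push_cast
  rfl

theorem Phi_val_lower_bound (n s : ℕ) :
    Phi n s = 0 ∨ padicValRat 2 (Phi n s) ≥ (s : ℤ) - (n / 2 : ℕ) := by
  rw [Phi_eq_oddChooseSum_div]
  rcases eq_or_ne (oddChooseSum n (fun i => (2 * i) ^ s)) 0 with hN | hN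
  · left
    rw [hN, Nat.cast_zero, zero_div]
  right
  have hval := (padicValNat_dvd_iff_le hN).1 (pow_dvd_oddChooseSum_two_mul_pow n s)
  rw [padicValRat.div (by exact_mod_cast hN) (by positivity), padicValRat.of_nat,
    padicValRat.of_nat, padicValNat_two_factorial]
  omega
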